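/- arXiv:2601.12772 — 2 statements merged into one kernel-verified Lean document; each statement's English description precedes it below -/
import Mathlib

section
/- A positive integer n₀ and a sequence m₀ = n₀, m₁, …, m_y with m_{k+1}·2^{s_{k+1}} = 3·m_k + 1 satisfies m_y = m₀ if and only if n₀ · (2^x - 3^y) = Σ_{k=0}^{y-1} 3^{y-1-k} · 2^{σ(k)}, where σ(y) = x. -/
/-!
Multiplying the recursion `m (k+1) * 2^(σ (k+1) - σ k) = 3 * m k + 1` by `2^(σ k)` turns it into the
affine recursion `M (k+1) = 3 * M k + 2^(σ k)` for `M k = m k * 2^(σ k)`, which unrolls to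
`m k * 2^(σ k) = 3^k * m 0 + C(k, σ)`. At `k = y` this reads `m y * 2^x = 3^y * n₀ + C(y, σ)`, and
since `2^x` is cancellable, `m y = n₀` is equivalent to `n₀ * (2^x - 3^y) = C(y, σ)`.
-/

open Finset

/-- The paper's `C(k, σ)`. -/
def cycleSum {R : Type*} [CommSemiring R] (σ : ℕ → ℕ) (k : ℕ) : R :=
  ∑ j ∈ range k, 3 ^ (k - 1 - j) * 2 ^ σ j

section CommSemiring

variable {R : Type*} [CommSemiring R]

lemma cycleSum_succ (σ : ℕ → ℕ) (k : ℕ) :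
    cycleSum σ (k + 1) = 3 * cycleSum σ k + (2 : R) ^ σ k := by
  have hpow : ∀ j ∈ range k,
      (3 : R) ^ (k + 1 - 1 - j) * 2 ^ σ j = 3 * (3 ^ (k - 1 - j) * 2 ^ σ j) := by
    intro j hj
    rw [show k + 1 - 1 - j = k - 1 - j + 1 by grind, pow_succ]
    ring
  rw [cycleSum, sum_range_succ, sum_congr rfl hpow, ← mul_sum, Nat.add_sub_cancel, Nat.sub_self,
    pow_zero, one_mul, cycleSum]

lemma mul_two_pow_succ_of_rec {σ : ℕ → ℕ} {m : ℕ → R} {k : ℕ} (hσ : σ k ≤ σ (k + 1))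
    (hrec : m (k + 1) * 2 ^ (σ (k + 1) - σ k) = 3 * m k + 1) :
    m (k + 1) * 2 ^ σ (k + 1) = 3 * (m k * 2 ^ σ k) + 2 ^ σ k := by
  rw [← Nat.sub_add_cancel hσ, pow_add, ← mul_assoc, hrec]
  ring

lemma mul_two_pow_eq_of_rec {σ : ℕ → ℕ} {m : ℕ → R} {n : ℕ} (hσ : Monotone σ) (h0 : σ 0 = 0)
    (hrec : ∀ k < n, m (k + 1) * 2 ^ (σ (k + 1) - σ k) = 3 * m k + 1) :
    ∀ k ≤ n, m k * 2 ^ σ k = 3 ^ k * m 0 + cycleSum σ k := by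
  intro k
  induction k with
  | zero => simp [h0, cycleSum]
  | succ k ih =>
    intro hk
    rw [mul_two_pow_succ_of_rec (hσ k.le_succ) (hrec k hk), ih (by omega), cycleSum_succ]
    ring

end CommSemiring

theorem cycle_equation_iff_general (x y : ℕ) (σ : ℕ → ℕ) (m : ℕ → ℤ) (n₀ : ℤ)
    (hmono : StrictMono σ) (h0 : σ 0 = 0) (hx : σ y = x)
    (hm0 : m 0 = n₀)
    (hrec : ∀ k < y, m (k + 1) * 2 ^ (σ (k + 1) - σ k) = 3 * m k + 1) :
    m y = m 0 ↔
      n₀ * ((2 : ℤ) ^ x - 3 ^ y) = ∑ k ∈ Finset.range y, 3 ^ (y - 1 - k) * 2 ^ σ k := by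
  have hclosed : m y * 2 ^ x = 3 ^ y * n₀ + cycleSum σ y := by
    rw [← hx, ← hm0]
    exact mul_two_pow_eq_of_rec hmono.monotone h0 hrec y le_rfl
  change _ ↔ _ = cycleSum σ y
  rw [hm0]
  constructor
  · rintro rfl
    linear_combination hclosed
  · intro h
    refine mul_right_cancel₀ (pow_ne_zero x two_ne_zero) ?_
    linear_combination hclosed - h

theorem cycle_equation_iff (x y : ℕ) (hy : 1 ≤ y) (σ : ℕ → ℕ) (m : ℕ → ℤ) (n₀ : ℤ)
    (hn₀ : 0 < n₀) (hmono : StrictMono σ) (h0 : σ 0 = 0) (hx : σ y = x)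
    (hm0 : m 0 = n₀)
    (hrec : ∀ k < y, m (k + 1) * 2 ^ (σ (k + 1) - σ k) = 3 * m k + 1) :
    m y = m 0 ↔
      n₀ * ((2 : ℤ) ^ x - 3 ^ y) = ∑ k ∈ Finset.range y, 3 ^ (y - 1 - k) * 2 ^ σ k :=
  cycle_equation_iff_general x y σ m n₀ hmono h0 hx hm0 hrec
end

section
/- Let S ⊆ ℕ² be a linear set, i.e., S = {b + Σᵢ λᵢ vᵢ : λᵢ ∈ ℕ} for some base vector b ∈ ℕ² and finitely many period vectors v₁, …, v_k ∈ ℕ². Then there exists M ≥ 1 such that for every x ∈ ℕ, the fiber S_x = {y : (x, y) ∈ S} is eventually periodic with some period dividing M (i.e., there exists N such that for all y ≥ N, y ∈ S_x ↔ y + M ∈ S_x). -/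
/-!
Write `S = b + ℕ v₁ + ⋯ + ℕ vₖ`. In a point of `S` over `x`, a period vector with positive first
coordinate is used at most `x` times, so its contribution to the second coordinate is bounded in
terms of `x` alone. Hence, high enough in the fibre over `x`, the vertical period vectors `(0, c)`
carry almost all of the height, and by pigeonhole one of them carries at least `M`, the product of
all the heights `c`; it can be used `M / c` times fewer, which moves the point down by `M`.
Conversely, adding `(0, M)` to a point of `S` stays in `S` as soon as a vertical period vector
exists; if none exists the fibre is finite.
-/

/-- A linear subset of ℕ²: a base vector plus ℕ-combinations of finitely many period vectors. -/
def IsLinear (S : Set (ℕ × ℕ)) : Prop :=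
  ∃ (b : ℕ × ℕ) (k : ℕ) (v : Fin k → ℕ × ℕ),
    S = {p | ∃ l : Fin k → ℕ, p = b + ∑ i, l i • v i}

open Finset

variable {ι : Type*} [Fintype ι] (v : ι → ℕ × ℕ)

def linearSet (b : ℕ × ℕ) : Set (ℕ × ℕ) :=
  {p | ∃ l : ι → ℕ, p = b + ∑ i, l i • v i}

def verticalIndices : Finset ι :=
  univ.filter fun i => (v i).1 = 0 ∧ 0 < (v i).2

theorem snd_sum_smul_le (l : ι → ℕ) :
    (∑ i, l i • v i).2 ≤
      (∑ i, l i • v i).1 * ∑ i, (v i).2 + ∑ i ∈ verticalIndices v, l i * (v i).2 := by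
  simp only [Prod.fst_sum, Prod.snd_sum, Prod.smul_fst, Prod.smul_snd, smul_eq_mul,
    verticalIndices]
  rw [← sum_filter_add_sum_filter_not univ (fun i => (v i).1 = 0 ∧ 0 < (v i).2), add_comm,
    mul_sum]
  gcongr
  refine (sum_le_sum fun i hi => ?_).trans (sum_le_sum_of_subset (subset_univ _))
  rw [mem_filter, not_and_or, not_lt, Nat.le_zero] at hi
  rcases hi.2 with hfst | hsnd
  · have hl : l i ≤ ∑ j, l j * (v j).1 :=
      (Nat.le_mul_of_pos_right _ (Nat.pos_of_ne_zero hfst)).trans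
        (single_le_sum (f := fun j => l j * (v j).1) (fun _ _ => Nat.zero_le _) (mem_univ i))
    exact Nat.mul_le_mul_right _ hl
  · simp [hsnd]

theorem exists_mem_verticalIndices_le_mul {l : ι → ℕ} {x M : ℕ}
    (hx : (∑ i, l i • v i).1 ≤ x)
    (hlarge : x * ∑ i, (v i).2 + #(verticalIndices v) * M < (∑ i, l i • v i).2) :
    ∃ i ∈ verticalIndices v, M ≤ l i * (v i).2 := by
  by_contra! h
  have hvert := sum_le_card_nsmul _ _ M fun i hi => (h i hi).le
  have hfst := Nat.mul_le_mul_right (∑ i, (v i).2) hx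
  have := snd_sum_smul_le v l
  rw [smul_eq_mul] at hvert
  omega

theorem smul_eq_of_mem_verticalIndices {i : ι} {M : ℕ} (hi : i ∈ verticalIndices v)
    (hM : (v i).2 ∣ M) : (M / (v i).2) • v i = (0, M) := by
  simp only [verticalIndices, mem_filter] at hi
  ext
  · simp [hi.2.1]
  · simp [Nat.div_mul_cancel hM]

theorem sum_add_single_smul [DecidableEq ι] (l : ι → ℕ) (i : ι) (d : ℕ) :
    ∑ j, (l + Pi.single i d : ι → ℕ) j • v j = ∑ j, l j • v j + d • v i := by
  simp [add_smul, sum_add_distrib, Pi.single_apply, ite_smul]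

theorem linearSet_fiber_eventually_periodic [DecidableEq ι] (b : ℕ × ℕ) {M : ℕ}
    (hM : ∀ i ∈ verticalIndices v, (v i).2 ∣ M) (x : ℕ) :
    ∃ N, ∀ y ≥ N, ((x, y) ∈ linearSet v b ↔ (x, y + M) ∈ linearSet v b) := by
  refine ⟨b.2 + x * ∑ i, (v i).2 + #(verticalIndices v) * M + 1, fun y hy => ⟨?_, ?_⟩⟩
  · rintro ⟨l, hl⟩
    obtain ⟨hx, hy'⟩ := Prod.ext_iff.mp hl
    simp only [Prod.fst_add, Prod.snd_add] at hx hy'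
    obtain ⟨i, hi, -⟩ :=
      exists_mem_verticalIndices_le_mul v (l := l) (x := x) (M := M) (by omega) (by omega)
    refine ⟨l + Pi.single i (M / (v i).2), ?_⟩
    rw [sum_add_single_smul, smul_eq_of_mem_verticalIndices v hi (hM i hi), ← add_assoc, ← hl]
    rfl
  · rintro ⟨l, hl⟩
    obtain ⟨hx, hy'⟩ := Prod.ext_iff.mp hl
    simp only [Prod.fst_add, Prod.snd_add] at hx hy'
    obtain ⟨i, hi, hle⟩ :=
      exists_mem_verticalIndices_le_mul v (l := l) (x := x) (M := M) (by omega) (by omega)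
    have hpos : 0 < (v i).2 := (mem_filter.mp hi).2.2
    have hd : M / (v i).2 ≤ l i :=
      Nat.le_of_mul_le_mul_right ((Nat.div_mul_cancel (hM i hi)).trans_le hle) hpos
    obtain ⟨l', rfl⟩ : ∃ l' : ι → ℕ, l = l' + Pi.single i (M / (v i).2) := by
      refine ⟨Function.update l i (l i - M / (v i).2), funext fun j => ?_⟩
      rcases eq_or_ne j i with rfl | hj
      · simp only [Pi.add_apply, Function.update_self, Pi.single_eq_same]
        omega
      · simp [hj]
    refine ⟨l', ?_⟩
    rw [sum_add_single_smul, smul_eq_of_mem_verticalIndices v hi (hM i hi), ← add_assoc] at hl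
    ext <;> simp only [Prod.ext_iff, Prod.fst_add, Prod.snd_add] at hl ⊢ <;> omega

theorem linear_fiber_eventually_periodic (S : Set (ℕ × ℕ)) (hS : IsLinear S) :
    ∃ M : ℕ, 1 ≤ M ∧ ∀ x : ℕ, ∃ N : ℕ, ∀ y ≥ N,
      ((x, y) ∈ S ↔ (x, y + M) ∈ S) := by
  obtain ⟨b, k, v, rfl⟩ := hS
  refine ⟨∏ i ∈ verticalIndices v, (v i).2, ?_, linearSet_fiber_eventually_periodic v b ?_⟩
  · exact Nat.one_le_iff_ne_zero.mpr <| prod_ne_zero_iff.mpr fun i hi => (mem_filter.mp hi).2.2.ne'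
  · exact fun i hi => dvd_prod_of_mem _ hi
end
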